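/- Let f : ℝ² → ℝ be a polynomial of degree n ≥ 2 whose top-degree homogeneous part f_n has nonvanishing gradient at (cos A, sin A) for a given angle A. Then the squared difference of the principal curvatures of the graph z = f(x,y), namely Δ²(x,y) = [((1+f_y²)·f_xx − 2·f_x·f_y·f_xy + (1+f_x²)·f_yy)² − 4·(1+f_x²+f_y²)·(f_xx·f_yy − f_xy²)] / (1+f_x²+f_y²)³, tends to 0 as R → ∞ along the ray (x,y) = (R·cos A, R·sin A). -/

import Mathlib

/-!
Restricted to the ray `t ↦ t • (cos A, sin A)`, every partial derivative of `f` becomes a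
one-variable polynomial in `t` whose `k`-th coefficient is the corresponding derivative of the
degree-`(k+1)` (resp. `(k+2)`) homogeneous component of `f` at `(cos A, sin A)`. So `f_x, f_y`
have degree `≤ n - 1`, with top coefficients the gradient of `f_n` (not both zero), and the
second derivatives have degree `≤ n - 2`. The denominator `(1 + f_x² + f_y²)³` therefore has
degree exactly `6n - 6`, while the numerator has degree `≤ 6n - 8`.
-/

open MvPolynomial Real Filter

/-- Evaluate a bivariate polynomial at `(x, y)`. -/
noncomputable def ev (p : MvPolynomial (Fin 2) ℝ) (x y : ℝ) : ℝ :=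
  eval ![x, y] p

/-- Formal partial derivative in the first variable. -/
noncomputable def Dx (p : MvPolynomial (Fin 2) ℝ) : MvPolynomial (Fin 2) ℝ :=
  pderiv (0 : Fin 2) p

/-- Formal partial derivative in the second variable. -/
noncomputable def Dy (p : MvPolynomial (Fin 2) ℝ) : MvPolynomial (Fin 2) ℝ :=
  pderiv (1 : Fin 2) p

/-- The square `(κ₁ − κ₂)²` of the difference of the principal curvatures of the
graph `z = f(x,y)` at `(x,y)`, for `f` the polynomial function determined by `p`. -/
noncomputable def Delta2 (p : MvPolynomial (Fin 2) ℝ) (x y : ℝ) : ℝ :=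
  (((1 + ev (Dy p) x y ^ 2) * ev (Dx (Dx p)) x y
      - 2 * ev (Dx p) x y * ev (Dy p) x y * ev (Dy (Dx p)) x y
      + (1 + ev (Dx p) x y ^ 2) * ev (Dy (Dy p)) x y) ^ 2
    - 4 * (1 + ev (Dx p) x y ^ 2 + ev (Dy p) x y ^ 2)
        * (ev (Dx (Dx p)) x y * ev (Dy (Dy p)) x y - ev (Dy (Dx p)) x y ^ 2))
  / (1 + ev (Dx p) x y ^ 2 + ev (Dy p) x y ^ 2) ^ 3

/-- `W = √(1 + f_x² + f_y²)`. -/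
noncomputable def Wgr (p : MvPolynomial (Fin 2) ℝ) (x y : ℝ) : ℝ :=
  Real.sqrt (1 + ev (Dx p) x y ^ 2 + ev (Dy p) x y ^ 2)

/-- The distance to infinity `d = 1 − √((W−1)/(W+1)) = 1 − |ξ|` of the point `(x,y)`
under the Gauss map of the graph `z = f(x,y)`. -/
noncomputable def dInf (p : MvPolynomial (Fin 2) ℝ) (x y : ℝ) : ℝ :=
  1 - Real.sqrt ((Wgr p x y - 1) / (Wgr p x y + 1))

namespace MvPolynomial

variable {σ R : Type*} [CommSemiring R]

lemma homogeneousComponent_pderiv (i : σ) (m : ℕ) (q : MvPolynomial σ R) :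
    homogeneousComponent m (pderiv i q) = pderiv i (homogeneousComponent (m + 1) q) := by
  induction q using MvPolynomial.induction_on' with
  | monomial d a =>
    have hd : (monomial d a).IsHomogeneous d.degree := isHomogeneous_monomial a rfl
    rw [homogeneousComponent_of_mem hd.pderiv, homogeneousComponent_of_mem hd]
    split_ifs
    · rfl
    · have : d = 0 := (Finsupp.degree_eq_zero_iff d).1 (by omega)
      simp [this]
    · omega
    · simp
  | add p q hp hq => simp only [map_add, hp, hq]

lemma totalDegree_pderiv_le (i : σ) (q : MvPolynomial σ R) :
    (pderiv i q).totalDegree ≤ q.totalDegree - 1 := by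
  conv_lhs => rw [← sum_homogeneousComponent q, map_sum]
  refine (totalDegree_finsetSum _ _).trans (Finset.sup_le fun k hk => ?_)
  refine ((homogeneousComponent_isHomogeneous k q).pderiv.totalDegree_le).trans ?_
  rw [Finset.mem_range] at hk
  omega

noncomputable def restrictLine (v : σ → R) : MvPolynomial σ R →ₐ[R] Polynomial R :=
  aeval fun i => Polynomial.C (v i) * Polynomial.X

lemma restrictLine_monomial (v : σ → R) (d : σ →₀ ℕ) (a : R) :
    restrictLine v (monomial d a) =
      Polynomial.C (eval v (monomial d a)) * Polynomial.X ^ d.degree := by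
  simp only [restrictLine, aeval_monomial, eval_monomial, mul_pow, Finsupp.prod_mul,
    Polynomial.algebraMap_eq, map_mul, map_finsuppProd Polynomial.C, map_pow]
  rw [mul_assoc, Finsupp.degree_apply, ← Finset.prod_pow_eq_pow_sum]
  rfl

lemma eval_restrictLine (v : σ → R) (t : R) (q : MvPolynomial σ R) :
    (restrictLine v q).eval t = eval (t • v) q := by
  induction q using MvPolynomial.induction_on with
  | C a => simp [restrictLine]
  | add p q hp hq => simp only [map_add, Polynomial.eval_add, hp, hq]
  | mul_X p i hp =>
    rw [map_mul, Polynomial.eval_mul, hp, restrictLine, aeval_X, Polynomial.eval_mul,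
      Polynomial.eval_C, Polynomial.eval_X, map_mul, eval_X, Pi.smul_apply, smul_eq_mul, mul_comm t]

lemma coeff_restrictLine (v : σ → R) (k : ℕ) (q : MvPolynomial σ R) :
    (restrictLine v q).coeff k = eval v (homogeneousComponent k q) := by
  induction q using MvPolynomial.induction_on' with
  | monomial d a =>
    rw [restrictLine_monomial, Polynomial.coeff_C_mul_X_pow,
      homogeneousComponent_of_mem (isHomogeneous_monomial a rfl)]
    split_ifs <;> rfl
  | add p q hp hq => simp only [map_add, Polynomial.coeff_add, hp, hq]

lemma natDegree_restrictLine_le (v : σ → R) (q : MvPolynomial σ R) :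
    (restrictLine v q).natDegree ≤ q.totalDegree :=
  Polynomial.natDegree_le_iff_coeff_eq_zero.2 fun k hk => by
    rw [coeff_restrictLine, homogeneousComponent_eq_zero k q (by exact_mod_cast hk), map_zero]

end MvPolynomial

section CurvatureExpressions

open Polynomial

variable {K : Type*} [CommRing K]

/- With `W² = firstFormDet f_x f_y = EG - F²`, the principal curvatures of the graph satisfy
`κ₁ + κ₂ = meanCurvatureNum / W³` and `κ₁ κ₂ = gaussCurvatureNum / W⁴`, so that
`(κ₁ - κ₂)² = (κ₁ + κ₂)² - 4 κ₁ κ₂ = sqCurvatureDiffNum / W⁶`. -/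

def firstFormDet (p₁ p₂ : K) : K := 1 + p₁ ^ 2 + p₂ ^ 2

def meanCurvatureNum (p₁ p₂ q₁₁ q₁₂ q₂₂ : K) : K :=
  (1 + p₂ ^ 2) * q₁₁ - 2 * p₁ * p₂ * q₁₂ + (1 + p₁ ^ 2) * q₂₂

def gaussCurvatureNum (q₁₁ q₁₂ q₂₂ : K) : K := q₁₁ * q₂₂ - q₁₂ ^ 2

def sqCurvatureDiffNum (p₁ p₂ q₁₁ q₁₂ q₂₂ : K) : K :=
  meanCurvatureNum p₁ p₂ q₁₁ q₁₂ q₂₂ ^ 2 - 4 * firstFormDet p₁ p₂ * gaussCurvatureNum q₁₁ q₁₂ q₂₂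

lemma eval_firstFormDet (t : K) (P₁ P₂ : K[X]) :
    (firstFormDet P₁ P₂).eval t = firstFormDet (P₁.eval t) (P₂.eval t) := by
  simp [firstFormDet]

lemma eval_sqCurvatureDiffNum (t : K) (P₁ P₂ Q₁₁ Q₁₂ Q₂₂ : K[X]) :
    (sqCurvatureDiffNum P₁ P₂ Q₁₁ Q₁₂ Q₂₂).eval t =
      sqCurvatureDiffNum (P₁.eval t) (P₂.eval t) (Q₁₁.eval t) (Q₁₂.eval t) (Q₂₂.eval t) := by
  simp [sqCurvatureDiffNum, meanCurvatureNum, gaussCurvatureNum, firstFormDet]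

variable {m : ℕ} {P₁ P₂ Q₁₁ Q₁₂ Q₂₂ : K[X]}

lemma natDegree_one_add_sq_le {P : K[X]} (hP : P.natDegree ≤ m) :
    (1 + P ^ 2).natDegree ≤ 2 * m :=
  (natDegree_add_le _ _).trans
    (max_le (natDegree_one.trans_le (Nat.zero_le _)) (natDegree_pow_le_of_le 2 hP))

lemma natDegree_firstFormDet_le (hP₁ : P₁.natDegree ≤ m) (hP₂ : P₂.natDegree ≤ m) :
    (firstFormDet P₁ P₂).natDegree ≤ 2 * m :=
  (natDegree_add_le _ _).trans
    (max_le (natDegree_one_add_sq_le hP₁) (natDegree_pow_le_of_le 2 hP₂))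

lemma coeff_firstFormDet (hm : m ≠ 0) (hP₁ : P₁.natDegree ≤ m) (hP₂ : P₂.natDegree ≤ m) :
    (firstFormDet P₁ P₂).coeff (2 * m) = P₁.coeff m ^ 2 + P₂.coeff m ^ 2 := by
  rw [firstFormDet, Polynomial.coeff_add, Polynomial.coeff_add,
    Polynomial.coeff_one, if_neg (by omega), two_mul, sq, sq, sq, sq,
    coeff_mul_add_eq_of_natDegree_le hP₁ hP₁, coeff_mul_add_eq_of_natDegree_le hP₂ hP₂, zero_add]

lemma natDegree_meanCurvatureNum_le (hP₁ : P₁.natDegree ≤ m) (hP₂ : P₂.natDegree ≤ m)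
    (hQ₁₁ : Q₁₁.natDegree ≤ m - 1) (hQ₁₂ : Q₁₂.natDegree ≤ m - 1) (hQ₂₂ : Q₂₂.natDegree ≤ m - 1) :
    (meanCurvatureNum P₁ P₂ Q₁₁ Q₁₂ Q₂₂).natDegree ≤ 3 * m - 1 := by
  have h₁ := natDegree_mul_le_of_le (natDegree_one_add_sq_le hP₂) hQ₁₁
  have h₂ : (2 * P₁ * P₂ * Q₁₂).natDegree ≤ 0 + m + m + (m - 1) := natDegree_mul_le_of_le
    (natDegree_mul_le_of_le (natDegree_mul_le_of_le (natDegree_ofNat 2).le hP₁) hP₂) hQ₁₂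
  have h₃ := natDegree_mul_le_of_le (natDegree_one_add_sq_le hP₁) hQ₂₂
  refine (natDegree_add_le _ _).trans (max_le ((natDegree_sub_le _ _).trans (max_le ?_ ?_)) ?_) <;>
    omega

lemma natDegree_gaussCurvatureNum_le {k : ℕ} (hQ₁₁ : Q₁₁.natDegree ≤ k)
    (hQ₁₂ : Q₁₂.natDegree ≤ k) (hQ₂₂ : Q₂₂.natDegree ≤ k) :
    (gaussCurvatureNum Q₁₁ Q₁₂ Q₂₂).natDegree ≤ 2 * k :=
  (natDegree_sub_le _ _).trans
    (max_le ((natDegree_mul_le_of_le hQ₁₁ hQ₂₂).trans_eq (two_mul k).symm)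
      (natDegree_pow_le_of_le 2 hQ₁₂))

lemma natDegree_sqCurvatureDiffNum_le (hP₁ : P₁.natDegree ≤ m) (hP₂ : P₂.natDegree ≤ m)
    (hQ₁₁ : Q₁₁.natDegree ≤ m - 1) (hQ₁₂ : Q₁₂.natDegree ≤ m - 1) (hQ₂₂ : Q₂₂.natDegree ≤ m - 1) :
    (sqCurvatureDiffNum P₁ P₂ Q₁₁ Q₁₂ Q₂₂).natDegree ≤ 6 * m - 2 := by
  have hH := natDegree_pow_le_of_le 2 (natDegree_meanCurvatureNum_le hP₁ hP₂ hQ₁₁ hQ₁₂ hQ₂₂)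
  have hK : (4 * firstFormDet P₁ P₂ * gaussCurvatureNum Q₁₁ Q₁₂ Q₂₂).natDegree ≤
      0 + 2 * m + 2 * (m - 1) := natDegree_mul_le_of_le
    (natDegree_mul_le_of_le (natDegree_ofNat 4).le (natDegree_firstFormDet_le hP₁ hP₂))
    (natDegree_gaussCurvatureNum_le hQ₁₁ hQ₁₂ hQ₂₂)
  exact (natDegree_sub_le _ _).trans (max_le (hH.trans (by omega)) (hK.trans (by omega)))

end CurvatureExpressions

section Asymptotics

open Polynomial Topology

variable {𝕜 : Type*} [NormedField 𝕜] [LinearOrder 𝕜] [IsStrictOrderedRing 𝕜] [OrderTopology 𝕜]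
  {m : ℕ} {P₁ P₂ Q₁₁ Q₁₂ Q₂₂ : 𝕜[X]}

theorem tendsto_sqCurvatureDiffNum_div_firstFormDet_pow (hm : m ≠ 0)
    (hP₁ : P₁.natDegree ≤ m) (hP₂ : P₂.natDegree ≤ m)
    (hQ₁₁ : Q₁₁.natDegree ≤ m - 1) (hQ₁₂ : Q₁₂.natDegree ≤ m - 1) (hQ₂₂ : Q₂₂.natDegree ≤ m - 1)
    (hlead : (P₁.coeff m, P₂.coeff m) ≠ (0, 0)) :
    Tendsto (fun t => sqCurvatureDiffNum (P₁.eval t) (P₂.eval t) (Q₁₁.eval t) (Q₁₂.eval t)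
      (Q₂₂.eval t) / firstFormDet (P₁.eval t) (P₂.eval t) ^ 3) atTop (𝓝 0) := by
  have hcoeff : (firstFormDet P₁ P₂).coeff (2 * m) ≠ 0 := by
    rw [coeff_firstFormDet hm hP₁ hP₂]
    contrapose! hlead
    rw [add_eq_zero_iff_of_nonneg (sq_nonneg _) (sq_nonneg _), sq_eq_zero_iff,
      sq_eq_zero_iff] at hlead
    rw [hlead.1, hlead.2]
  have hD : (firstFormDet P₁ P₂).natDegree = 2 * m :=
    (natDegree_firstFormDet_le hP₁ hP₂).antisymm (le_natDegree_of_ne_zero hcoeff)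
  have hlt : (sqCurvatureDiffNum P₁ P₂ Q₁₁ Q₁₂ Q₂₂).degree < (firstFormDet P₁ P₂ ^ 3).degree := by
    rw [degree_eq_natDegree (pow_ne_zero 3 fun h => hcoeff (by simp [h])), natDegree_pow, hD]
    refine (degree_le_of_natDegree_le
      (natDegree_sqCurvatureDiffNum_le hP₁ hP₂ hQ₁₁ hQ₁₂ hQ₂₂)).trans_lt ?_
    exact_mod_cast (by omega : 6 * m - 2 < 3 * (2 * m))
  simpa only [Polynomial.eval_pow, eval_sqCurvatureDiffNum, eval_firstFormDet] using
    div_tendsto_atTop_zero_of_degree_lt _ _ hlt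

end Asymptotics

lemma Delta2_eq_sqCurvatureDiffNum_div (p : MvPolynomial (Fin 2) ℝ) (x y : ℝ) :
    Delta2 p x y =
      sqCurvatureDiffNum (ev (Dx p) x y) (ev (Dy p) x y) (ev (Dx (Dx p)) x y)
          (ev (Dy (Dx p)) x y) (ev (Dy (Dy p)) x y) /
        firstFormDet (ev (Dx p) x y) (ev (Dy p) x y) ^ 3 :=
  rfl

lemma ev_mul_mul_eq_eval_restrictLine (q : MvPolynomial (Fin 2) ℝ) (t x y : ℝ) :
    ev q (t * x) (t * y) = (restrictLine ![x, y] q).eval t := by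
  rw [eval_restrictLine, ev, Matrix.smul_cons, Matrix.smul_cons, Matrix.smul_empty]
  rfl

/-- If the top-degree homogeneous part of a polynomial `f` of degree `n ≥ 2` has
nonvanishing gradient at `(cos A, sin A)`, then `(κ₁ − κ₂)² → 0` along the ray
`(R·cos A, R·sin A)` as `R → ∞`. -/
theorem curvature_diff_tendsto_zero_along_ray (p : MvPolynomial (Fin 2) ℝ) (n : ℕ)
    (hn : 2 ≤ n) (hdeg : p.totalDegree = n) (A : ℝ)
    (hgrad : (ev (Dx (homogeneousComponent n p)) (Real.cos A) (Real.sin A),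
              ev (Dy (homogeneousComponent n p)) (Real.cos A) (Real.sin A)) ≠ (0, 0)) :
    Tendsto (fun R : ℝ => Delta2 p (R * Real.cos A) (R * Real.sin A))
      atTop (nhds 0) := by
  set v : Fin 2 → ℝ := ![Real.cos A, Real.sin A]
  have hfirst (i : Fin 2) : (restrictLine v (pderiv i p)).natDegree ≤ n - 1 :=
    (natDegree_restrictLine_le v _).trans ((totalDegree_pderiv_le i p).trans_eq (by rw [hdeg]))
  have hsecond (i j : Fin 2) : (restrictLine v (pderiv j (pderiv i p))).natDegree ≤ n - 1 - 1 :=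
    (natDegree_restrictLine_le v _).trans ((totalDegree_pderiv_le j _).trans
      (Nat.sub_le_sub_right ((totalDegree_pderiv_le i p).trans_eq (by rw [hdeg])) 1))
  have hlead (i : Fin 2) : (restrictLine v (pderiv i p)).coeff (n - 1) =
      eval v (pderiv i (homogeneousComponent n p)) := by
    rw [coeff_restrictLine, homogeneousComponent_pderiv, Nat.sub_add_cancel (by omega)]
  refine (tendsto_sqCurvatureDiffNum_div_firstFormDet_pow (by omega) (hfirst 0) (hfirst 1)
    (hsecond 0 0) (hsecond 0 1) (hsecond 1 1) ?_).congr fun R => ?_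
  · rwa [hlead, hlead]
  · simp only [Delta2_eq_sqCurvatureDiffNum_div, ev_mul_mul_eq_eval_restrictLine, Dx, Dy]
    rfl
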